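/- For every bipartite matrix ρ on ℂ^d ⊗ ℂ^d, the trace norm of the partial transpose of the realigned matrix equals the trace norm of the partial transpose of ρ: ‖R(ρ)^{T₂}‖_tr = ‖ρ^{T₂}‖_tr. -/

import Mathlib

open Matrix Kronecker ComplexOrder

/-- Trace norm `‖X‖_tr = Tr √(X Xᴴ)`. -/
noncomputable def traceNorm {m n : Type*} [Fintype m] [Fintype n] [DecidableEq m]
    (X : Matrix m n ℂ) : ℝ :=
  ((((Matrix.posSemidef_self_mul_conjTranspose X).1.eigenvectorUnitary : Matrix m m ℂ) *
      diagonal (fun i => (((Matrix.posSemidef_self_mul_conjTranspose X).1.eigenvalues i).sqrt : ℂ)) *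
      (star (Matrix.posSemidef_self_mul_conjTranspose X).1.eigenvectorUnitary : Matrix m m ℂ)).trace).re

/-- A density matrix: positive semidefinite with trace 1. -/
def IsDensityMatrix {n : Type*} [Fintype n] (ρ : Matrix n n ℂ) : Prop :=
  ρ.PosSemidef ∧ ρ.trace = 1

/-- The realignment map: `R(ρ)_{(i,j),(k,l)} = ρ_{(i,k),(j,l)}`. -/
def realign {dA dB : ℕ} (ρ : Matrix (Fin dA × Fin dB) (Fin dA × Fin dB) ℂ) :
    Matrix (Fin dA × Fin dA) (Fin dB × Fin dB) ℂ :=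
  fun p q => ρ (p.1, q.1) (p.2, q.2)

/-- Partial transpose on the second subsystem: `(ρ^{T₂})_{(i,k),(j,l)} = ρ_{(i,l),(j,k)}`. -/
def ptranspose2 {d : ℕ} (ρ : Matrix (Fin d × Fin d) (Fin d × Fin d) ℂ) :
    Matrix (Fin d × Fin d) (Fin d × Fin d) ℂ :=
  fun p q => ρ (p.1, q.2) (q.1, p.2)

/-- The swap (exchange) operator `F_{(i,k),(j,l)} = δ_{il} δ_{kj}`. -/
def swapOp (d : ℕ) : Matrix (Fin d × Fin d) (Fin d × Fin d) ℂ :=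
  fun p q => if p.1 = q.2 ∧ p.2 = q.1 then 1 else 0

/-- The unnormalized maximally entangled projector `(|Ω⟩⟨Ω|)_{(i,k),(j,l)} = δ_{ik} δ_{jl}`. -/
def omegaProj (d : ℕ) : Matrix (Fin d × Fin d) (Fin d × Fin d) ℂ :=
  fun p q => if p.1 = p.2 ∧ q.1 = q.2 then 1 else 0

/-- Separability: `ρ` is a finite convex combination of products of density matrices. -/
def IsSeparableState {dA dB : ℕ} (ρ : Matrix (Fin dA × Fin dB) (Fin dA × Fin dB) ℂ) : Prop :=
  ∃ (m : ℕ) (p : Fin m → ℝ) (σ : Fin m → Matrix (Fin dA) (Fin dA) ℂ)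
    (τ : Fin m → Matrix (Fin dB) (Fin dB) ℂ),
    (∀ k, 0 ≤ p k) ∧ (∑ k, p k = 1) ∧ (∀ k, IsDensityMatrix (σ k)) ∧
    (∀ k, IsDensityMatrix (τ k)) ∧ ρ = ∑ k, (p k : ℂ) • (σ k ⊗ₖ τ k)

theorem traceNorm_eq_re_trace_cfc_sqrt {m n : Type*} [Fintype m] [Fintype n] [DecidableEq m]
    (X : Matrix m n ℂ) : traceNorm X = (cfc Real.sqrt (X * Xᴴ)).trace.re := by
  rw [(posSemidef_self_mul_conjTranspose X).1.cfc_eq]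
  rfl

theorem traceNorm_submatrix_equiv_right {m n n' : Type*} [Fintype m] [Fintype n] [Fintype n']
    [DecidableEq m] (X : Matrix m n ℂ) (e : n' ≃ n) :
    traceNorm (X.submatrix id e) = traceNorm X := by
  rw [traceNorm_eq_re_trace_cfc_sqrt, traceNorm_eq_re_trace_cfc_sqrt, conjTranspose_submatrix,
    submatrix_mul_equiv, submatrix_id_id]

theorem ptranspose2_realign {d : ℕ} (ρ : Matrix (Fin d × Fin d) (Fin d × Fin d) ℂ) :
    ptranspose2 (realign ρ) = (ptranspose2 ρ).submatrix id Prod.swap :=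
  rfl

/-- `‖R(ρ)^{T₂}‖_tr = ‖ρ^{T₂}‖_tr`. -/
theorem traceNorm_ptranspose_realign {d : ℕ}
    (ρ : Matrix (Fin d × Fin d) (Fin d × Fin d) ℂ) :
    traceNorm (ptranspose2 (realign ρ)) = traceNorm (ptranspose2 ρ) := by
  rw [ptranspose2_realign]
  exact traceNorm_submatrix_equiv_right _ (Equiv.prodComm _ _)
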